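/- arXiv:2507.15090 — 5 statements merged into one kernel-verified Lean document; each statement's English description precedes it below -/
import Mathlib

section
/- Let X be a wide-sense stationary, mean-square continuous complex random process with spectral measure μ and covariance R_X(t) = ∫_ℝ e^{iλt} dμ(λ). For 0 < α < 1, the condition ∫_ℝ |λ|^{2α} dμ(λ) < ∞ holds if and only if ∫_ℝ |R_X(0) − R_X(h)| |h|^{−1−2α} dh < ∞. -/
open MeasureTheory Set
open scoped ENNReal ComplexConjugate

/-! By the symmetry of `μ`, `R = charFun μ` is real and
`‖R 0 - R h‖ = ∫ (1 - cos (h λ)) dμ(λ)`. Tonelli and the substitution `u = λ h` turn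
`∫ ‖R 0 - R h‖ |h| ^ (-1 - 2α) dh` into `C_α ∫ |λ| ^ (2α) dμ(λ)` with
`C_α = ∫ (1 - cos u) |u| ^ (-1 - 2α) du`. This constant is positive, and finite for `0 < α < 1`
since `1 - cos u ≤ u² / 2` near `0` and `1 - cos u ≤ 2` near infinity. -/

section CharFun

variable {μ : Measure ℝ}

lemma conj_charFun_of_map_neg_eq (hμ : μ.map (fun x => -x) = μ) (t : ℝ) :
    conj (charFun μ t) = charFun μ t := by
  rw [← charFun_neg, ← neg_one_mul, ← charFun_map_mul]
  simp only [neg_one_mul, hμ]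

lemma re_charFun_zero_sub [IsFiniteMeasure μ] (t : ℝ) :
    (charFun μ 0 - charFun μ t).re = ∫ x, (1 - Real.cos (t * x)) ∂μ := by
  have hexp : Integrable (fun x : ℝ => Complex.exp (t * x * Complex.I)) μ :=
    .of_bound (by fun_prop) 1 (ae_of_all _ fun x => by
      rw [← Complex.ofReal_mul, Complex.norm_exp_ofReal_mul_I])
  have hcos : Integrable (fun x : ℝ => Real.cos (t * x)) μ := by
    simpa [← Complex.ofReal_mul, Complex.exp_ofReal_mul_I_re] using hexp.re
  have hre := integral_re hexp
  simp only [RCLike.re_to_complex, ← Complex.ofReal_mul, Complex.exp_ofReal_mul_I_re] at hre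
  rw [integral_sub (integrable_const 1) hcos, charFun_zero, charFun_apply_real, Complex.sub_re,
    hre]
  simp

lemma norm_charFun_zero_sub_of_map_neg_eq [IsFiniteMeasure μ] (hμ : μ.map (fun x => -x) = μ)
    (t : ℝ) : ‖charFun μ 0 - charFun μ t‖ = ∫ x, (1 - Real.cos (t * x)) ∂μ := by
  have him : (charFun μ 0 - charFun μ t).im = 0 := by
    rw [Complex.sub_im, (Complex.conj_eq_iff_im).1 (conj_charFun_of_map_neg_eq hμ t)]
    simp
  rw [← Complex.abs_re_eq_norm.2 him, re_charFun_zero_sub,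
    abs_of_nonneg (integral_nonneg fun x => sub_nonneg.2 (Real.cos_le_one _))]

end CharFun

lemma lintegral_comp_mul_left (f : ℝ → ℝ≥0∞) {c : ℝ} (hc : c ≠ 0) :
    ∫⁻ x, f (c * x) = ENNReal.ofReal |c⁻¹| * ∫⁻ x, f x := by
  have := (Homeomorph.mulLeft₀ c hc).measurableEmbedding.lintegral_map (μ := volume) f
  rw [Homeomorph.coe_mulLeft₀, Real.map_volume_mul_left hc, lintegral_smul_measure] at this
  exact this.symm

lemma lintegral_one_sub_cos_mul_mul_abs_rpow {s : ℝ} (hs : s ≠ -1) (c : ℝ) :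
    ∫⁻ x, ENNReal.ofReal ((1 - Real.cos (c * x)) * |x| ^ s) =
      ENNReal.ofReal (|c| ^ (-1 - s)) * ∫⁻ u, ENNReal.ofReal ((1 - Real.cos u) * |u| ^ s) := by
  rcases eq_or_ne c 0 with rfl | hc
  · simp [Real.zero_rpow (show -1 - s ≠ 0 by contrapose! hs; linarith)]
  have hc' : 0 < |c| := abs_pos.2 hc
  have hpt : ∀ x, (1 - Real.cos (c * x)) * |x| ^ s
      = |c| ^ (-s) * ((1 - Real.cos (c * x)) * |c * x| ^ s) := fun x => by
    rw [abs_mul, Real.mul_rpow hc'.le (abs_nonneg x), Real.rpow_neg hc'.le]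
    field_simp
  simp_rw [hpt, ENNReal.ofReal_mul (Real.rpow_nonneg hc'.le _)]
  rw [lintegral_const_mul' _ _ ENNReal.ofReal_ne_top,
    lintegral_comp_mul_left (fun u => ENNReal.ofReal ((1 - Real.cos u) * |u| ^ s)) hc,
    ← mul_assoc, ← ENNReal.ofReal_mul (Real.rpow_nonneg hc'.le _), abs_inv,
    ← Real.rpow_neg_one, ← Real.rpow_add hc', neg_add_eq_sub]

lemma integrable_one_sub_cos_mul_abs_rpow {s : ℝ} (hs₃ : -3 < s) (hs₁ : s < -1) :
    Integrable (fun u : ℝ => (1 - Real.cos u) * |u| ^ s) := by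
  have hf := integrable_fun_norm_addHaar (volume : Measure ℝ)
    (f := fun y : ℝ => (1 - Real.cos y) * y ^ s)
  simp only [Real.norm_eq_abs, Real.cos_abs, Module.finrank_self, pow_zero, one_smul,
    tsub_self] at hf
  refine hf.2 ?_
  rw [← Ioo_union_Ici_eq_Ioi zero_lt_one]
  refine .union ?_ ?_
  · have hmaj : IntegrableOn (fun y : ℝ => 2⁻¹ * y ^ (s + 2)) (Ioo 0 1) :=
      ((intervalIntegral.integrableOn_Ioo_rpow_iff one_pos).2 (by linarith)).const_mul _
    refine hmaj.mono' (by fun_prop) (ae_restrict_of_forall_mem measurableSet_Ioo fun y hy => ?_)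
    have hcos : 1 - Real.cos y ≤ 2⁻¹ * y ^ 2 := by
      linarith [Real.one_sub_sq_div_two_le_cos (x := y)]
    rw [Real.norm_of_nonneg (mul_nonneg (sub_nonneg.2 (Real.cos_le_one y))
      (Real.rpow_nonneg hy.1.le _)), Real.rpow_add hy.1, Real.rpow_two]
    calc (1 - Real.cos y) * y ^ s ≤ 2⁻¹ * y ^ 2 * y ^ s :=
          mul_le_mul_of_nonneg_right hcos (Real.rpow_nonneg hy.1.le _)
      _ = _ := by ring
  · rw [integrableOn_Ici_iff_integrableOn_Ioi]
    have hmaj : IntegrableOn (fun y : ℝ => 2 * y ^ s) (Ioi 1) :=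
      (integrableOn_Ioi_rpow_of_lt hs₁ one_pos).const_mul _
    refine hmaj.mono' (by fun_prop) (ae_restrict_of_forall_mem measurableSet_Ioi fun y hy => ?_)
    have hy0 : (0 : ℝ) < y := zero_lt_one.trans hy
    rw [Real.norm_of_nonneg (mul_nonneg (sub_nonneg.2 (Real.cos_le_one y))
      (Real.rpow_nonneg hy0.le _))]
    gcongr
    linarith [Real.neg_one_le_cos y]

lemma lintegral_one_sub_cos_mul_abs_rpow_pos (s : ℝ) :
    0 < ∫⁻ u, ENNReal.ofReal ((1 - Real.cos u) * |u| ^ s) := by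
  rw [lintegral_pos_iff_support (by fun_prop)]
  have hsub : Ioo (Real.pi / 2) (Real.pi + Real.pi / 2) ⊆
      Function.support fun u => ENNReal.ofReal ((1 - Real.cos u) * |u| ^ s) := fun u hu => by
    have hu0 : 0 < u := (by positivity : 0 < Real.pi / 2).trans hu.1
    have hcos := Real.cos_neg_of_pi_div_two_lt_of_lt hu.1 hu.2
    simp only [Function.mem_support, ne_eq, ENNReal.ofReal_eq_zero, not_le]
    exact mul_pos (by linarith) (Real.rpow_pos_of_pos (abs_pos.2 hu0.ne') _)
  refine lt_of_lt_of_le ?_ (measure_mono hsub)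
  simp [Real.pi_pos]

lemma lintegral_norm_charFun_zero_sub_mul_abs_rpow {μ : Measure ℝ} [IsFiniteMeasure μ]
    (hμ : μ.map (fun x => -x) = μ) {s : ℝ} (hs : s ≠ -1) :
    ∫⁻ t, ENNReal.ofReal (‖charFun μ 0 - charFun μ t‖ * |t| ^ s) =
      (∫⁻ x, ENNReal.ofReal (|x| ^ (-1 - s)) ∂μ) *
        ∫⁻ u, ENNReal.ofReal ((1 - Real.cos u) * |u| ^ s) := by
  calc ∫⁻ t, ENNReal.ofReal (‖charFun μ 0 - charFun μ t‖ * |t| ^ s)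
      = ∫⁻ t, ∫⁻ x, ENNReal.ofReal ((1 - Real.cos (t * x)) * |t| ^ s) ∂μ :=
        lintegral_congr fun t => by
          have hint : Integrable (fun x => (1 - Real.cos (t * x)) * |t| ^ s) μ :=
            ((integrable_const 1).sub (.of_bound (by fun_prop) 1
              (ae_of_all _ fun x => Real.abs_cos_le_one _))).mul_const _
          rw [norm_charFun_zero_sub_of_map_neg_eq hμ, ← integral_mul_const,
            ofReal_integral_eq_lintegral_ofReal hint (ae_of_all _ fun x =>
              mul_nonneg (sub_nonneg.2 (Real.cos_le_one _)) (Real.rpow_nonneg (abs_nonneg t) s))]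
    _ = ∫⁻ x, (∫⁻ t, ENNReal.ofReal ((1 - Real.cos (x * t)) * |t| ^ s)) ∂μ := by
        rw [lintegral_lintegral_swap (by fun_prop)]
        exact lintegral_congr fun x => lintegral_congr fun t => by rw [mul_comm t x]
    _ = ∫⁻ x, ENNReal.ofReal (|x| ^ (-1 - s)) *
          (∫⁻ u, ENNReal.ofReal ((1 - Real.cos u) * |u| ^ s)) ∂μ := by
        simp_rw [lintegral_one_sub_cos_mul_mul_abs_rpow hs]
    _ = _ := lintegral_mul_const _ (by fun_prop)

theorem stmt_5_general (μ : Measure ℝ) [IsFiniteMeasure μ]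
    (hsymm : μ.map (fun lam => -lam) = μ)
    (R : ℝ → ℂ)
    (hR : ∀ t : ℝ, R t = ∫ lam : ℝ, Complex.exp (Complex.I * lam * t) ∂μ)
    (α : ℝ) (hα0 : 0 < α) (hα1 : α < 1) :
    (∫⁻ lam : ℝ, ENNReal.ofReal (|lam| ^ (2 * α)) ∂μ) < ⊤ ↔
    (∫⁻ h : ℝ, ENNReal.ofReal (‖R 0 - R h‖ * |h| ^ (-1 - 2 * α)) ∂volume) < ⊤ := by
  have hRchar : R = charFun μ := funext fun t => by
    rw [hR, charFun_apply_real]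
    congr 1 with x
    ring_nf
  have hC_pos := lintegral_one_sub_cos_mul_abs_rpow_pos (-1 - 2 * α)
  have hC_lt_top := (integrable_one_sub_cos_mul_abs_rpow (s := -1 - 2 * α)
    (by linarith) (by linarith)).lintegral_lt_top
  rw [hRchar, lintegral_norm_charFun_zero_sub_mul_abs_rpow hsymm (by linarith),
    show -1 - (-1 - 2 * α) = 2 * α by ring]
  simp only [ENNReal.mul_lt_top_iff, hC_lt_top, hC_pos.ne', and_true, or_false]
  exact (or_iff_left_of_imp fun h => h ▸ ENNReal.zero_lt_top).symm

/-- Let `X` be a wide-sense stationary mean-square continuous complex process with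
(finite, symmetric) spectral measure `μ` and covariance `R(t) = ∫ e^{iλt} dμ(λ)`.
For `0 < α < 1`, `∫ |λ|^{2α} dμ(λ) < ∞` iff `∫ |R(0) - R(h)| |h|^{-1-2α} dh < ∞`. -/
theorem stmt_5 {Ω : Type*} [MeasureSpace Ω] [IsProbabilityMeasure (volume : Measure Ω)]
    (X : ℝ → Ω → ℂ) (hX2 : ∀ t, MemLp (X t) 2 (volume : Measure Ω))
    (μ : Measure ℝ) [IsFiniteMeasure μ]
    (hsymm : μ.map (fun lam => -lam) = μ)
    (R : ℝ → ℂ)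
    (hmean : ∀ t, ∫ ω, X t ω ∂volume = 0)
    (hcov : ∀ t s : ℝ, ∫ ω, X t ω * (starRingEnd ℂ) (X s ω) ∂volume = R (t - s))
    (hR : ∀ t : ℝ, R t = ∫ lam : ℝ, Complex.exp (Complex.I * lam * t) ∂μ)
    (hcont : Filter.Tendsto (fun t : ℝ => ∫ ω, ‖X t ω - X 0 ω‖ ^ 2 ∂volume)
      (nhds 0) (nhds 0))
    (α : ℝ) (hα0 : 0 < α) (hα1 : α < 1) :
    (∫⁻ lam : ℝ, ENNReal.ofReal (|lam| ^ (2 * α)) ∂μ) < ⊤ ↔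
    (∫⁻ h : ℝ, ENNReal.ofReal (‖R 0 - R h‖ * |h| ^ (-1 - 2 * α)) ∂volume) < ⊤ :=
  stmt_5_general μ hsymm R hR α hα0 hα1
end

section
/- Let μ be a finite Borel measure on ℝ and 0 < α < 2. Then ∫_ℝ |λ|^{2α} dμ(λ) < ∞ if and only if ∫_ℝ (∫_ℝ |e^{ihλ} + e^{−ihλ} − 2|² dμ(λ)) |h|^{−1−2α} dh < ∞. -/
/-!
By Tonelli, the double integral is `∫ (∫ (2 - 2 cos (hλ))² |h|^(-1-2α) dh) dμ(λ)`, and the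
substitution `h ↦ h / λ` turns the inner integral into `C_α |λ|^(2α)` with
`C_α = ∫ (2 - 2 cos h)² |h|^(-1-2α) dh`. Since `(2 - 2 cos h)² ≤ min (h⁴, 16)`, the integrand of
`C_α` is `O(|h|^(3-2α))` near `0` and `O(|h|^(-1-2α))` at infinity, so `0 < C_α < ∞` for
`0 < α < 2`, and the two integrals in the statement are finite together.
-/

open MeasureTheory Set Real
open scoped ENNReal

lemma norm_exp_mul_I_add_exp_neg_sub_two_sq (x : ℝ) :
    ‖Complex.exp (Complex.I * x) + Complex.exp (-(Complex.I * x)) - 2‖ ^ 2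
      = (2 - 2 * cos x) ^ 2 := by
  have h : Complex.exp (Complex.I * x) + Complex.exp (-(Complex.I * x)) - 2
      = ((2 * cos x - 2 : ℝ) : ℂ) := by
    rw [mul_comm, ← neg_mul, Complex.exp_mul_I, Complex.exp_mul_I, Complex.cos_neg,
      Complex.sin_neg]
    push_cast
    ring
  rw [h, Complex.norm_real, Real.norm_eq_abs, sq_abs]
  ring

lemma sq_two_sub_two_mul_cos_le (x : ℝ) : (2 - 2 * cos x) ^ 2 ≤ min (x ^ 4) 16 := by
  have h0 : 0 ≤ 2 - 2 * cos x := by linarith [cos_le_one x]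
  have h4 : 2 - 2 * cos x ≤ 4 := by linarith [neg_one_le_cos x]
  have hx : 2 - 2 * cos x ≤ x ^ 2 := by linarith [one_sub_sq_div_two_le_cos (x := x)]
  refine le_min ?_ (by nlinarith)
  calc (2 - 2 * cos x) ^ 2 ≤ (x ^ 2) ^ 2 := by gcongr
    _ = x ^ 4 := by ring

lemma sq_two_sub_two_mul_cos_mul_abs_rpow_le (x s : ℝ) :
    (2 - 2 * cos x) ^ 2 * |x| ^ s ≤ 16 * min (|x| ^ (s + 4)) (|x| ^ s) := by
  rcases eq_or_ne x 0 with rfl | hx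
  · norm_num
    exact ⟨by positivity, by positivity⟩
  have hpow : |x| ^ (s + 4) = x ^ 4 * |x| ^ s := by
    rw [rpow_add (abs_pos.2 hx), mul_comm, rpow_ofNat, (by decide : Even 4).pow_abs]
  have hcos := sq_two_sub_two_mul_cos_le x
  rw [hpow, mul_min_of_nonneg _ _ (by norm_num)]
  refine le_min ?_ ?_
  · calc (2 - 2 * cos x) ^ 2 * |x| ^ s ≤ x ^ 4 * |x| ^ s := by
          gcongr; exact hcos.trans (min_le_left _ _)
      _ ≤ 16 * (x ^ 4 * |x| ^ s) := le_mul_of_one_le_left (by positivity) (by norm_num)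
  · gcongr; exact hcos.trans (min_le_right _ _)

lemma lintegral_comp_abs (f : ℝ → ℝ≥0∞) : ∫⁻ x, f |x| = 2 * ∫⁻ x in Ioi 0, f x := by
  have hpos : ∫⁻ x in Ioi 0, f |x| = ∫⁻ x in Ioi 0, f x :=
    setLIntegral_congr_fun measurableSet_Ioi fun x hx => by rw [abs_of_pos hx]
  have hneg : ∫⁻ x in Iic 0, f |x| = ∫⁻ x in Ioi 0, f x := by
    rw [← (Measure.measurePreserving_neg volume).setLIntegral_comp_preimage_emb
      (Homeomorph.neg ℝ).measurableEmbedding, ← hpos]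
    simp only [neg_preimage, neg_Iic, neg_zero, abs_neg]
    exact setLIntegral_congr Ioi_ae_eq_Ici.symm
  rw [← lintegral_add_compl _ measurableSet_Ioi, compl_Ioi, hpos, hneg, two_mul]

lemma lintegral_min_abs_rpow_lt_top {c d : ℝ} (hc : -1 < c) (hd : d < -1) :
    ∫⁻ x, ENNReal.ofReal (min (|x| ^ c) (|x| ^ d)) < ⊤ := by
  have h0 : IntegrableOn (fun x : ℝ => x ^ c) (Ioc 0 1) := by
    simpa [intervalIntegrable_iff_integrableOn_Ioc_of_le zero_le_one] using
      intervalIntegral.intervalIntegrable_rpow' (a := 0) (b := 1) hc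
  have hinf : IntegrableOn (fun x : ℝ => x ^ d) (Ioi 1) :=
    (integrableOn_Ioi_rpow_iff zero_lt_one).2 hd
  have hsplit : ∫⁻ x in Ioi 0, ENNReal.ofReal (min (x ^ c) (x ^ d))
      ≤ (∫⁻ x in Ioc 0 1, ENNReal.ofReal (x ^ c)) + ∫⁻ x in Ioi 1, ENNReal.ofReal (x ^ d) := by
    rw [← Ioc_union_Ioi_eq_Ioi zero_le_one]
    exact (lintegral_union_le _ _ _).trans (add_le_add
      (lintegral_mono fun x => ENNReal.ofReal_le_ofReal (min_le_left _ _))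
      (lintegral_mono fun x => ENNReal.ofReal_le_ofReal (min_le_right _ _)))
  rw [lintegral_comp_abs fun y => ENNReal.ofReal (min (y ^ c) (y ^ d))]
  exact ENNReal.mul_lt_top ENNReal.ofNat_lt_top (hsplit.trans_lt
    (ENNReal.add_lt_top.2 ⟨h0.lintegral_lt_top, hinf.lintegral_lt_top⟩))

lemma lintegral_comp_mul_right_mul_abs_rpow (f : ℝ → ℝ≥0∞) (s : ℝ) {lam : ℝ} (hlam : lam ≠ 0) :
    ∫⁻ h, f (h * lam) * ENNReal.ofReal (|h| ^ s)
      = ENNReal.ofReal (|lam| ^ (-1 - s)) * ∫⁻ u, f u * ENNReal.ofReal (|u| ^ s) := by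
  have hlam' : 0 < |lam| := abs_pos.2 hlam
  have hweight : ∀ h : ℝ, ENNReal.ofReal (|h| ^ s)
      = ENNReal.ofReal (|h * lam| ^ s) * ENNReal.ofReal (|lam| ^ (-s)) := by
    intro h
    rw [← ENNReal.ofReal_mul (by positivity), abs_mul, mul_rpow (abs_nonneg h) hlam'.le,
      mul_assoc, ← rpow_add hlam', add_neg_cancel, rpow_zero, mul_one]
  have hsubst : ∫⁻ h, f (h * lam) * ENNReal.ofReal (|h * lam| ^ s)
      = ENNReal.ofReal |lam⁻¹| * ∫⁻ u, f u * ENNReal.ofReal (|u| ^ s) := by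
    rw [← smul_eq_mul, ← lintegral_smul_measure, ← Real.map_volume_mul_right hlam,
      (measurableEmbedding_mulRight₀ hlam).lintegral_map]
  have hsplit : ∫⁻ h, f (h * lam) * ENNReal.ofReal (|h| ^ s)
      = (∫⁻ h, f (h * lam) * ENNReal.ofReal (|h * lam| ^ s)) * ENNReal.ofReal (|lam| ^ (-s)) := by
    rw [← lintegral_mul_const' _ _ ENNReal.ofReal_ne_top]
    exact lintegral_congr fun h => by rw [hweight h, mul_assoc]
  rw [hsplit, hsubst, mul_comm, ← mul_assoc,
    ← ENNReal.ofReal_mul (by positivity), abs_inv, ← rpow_neg_one, ← rpow_add hlam',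
    neg_add_eq_sub]

noncomputable def secondDifferenceConst (α : ℝ) : ℝ≥0∞ :=
  ∫⁻ h, ENNReal.ofReal ((2 - 2 * cos h) ^ 2) * ENNReal.ofReal (|h| ^ (-1 - 2 * α))

lemma secondDifferenceConst_lt_top {α : ℝ} (hα0 : 0 < α) (hα2 : α < 2) :
    secondDifferenceConst α < ⊤ := by
  set s := -1 - 2 * α
  calc secondDifferenceConst α
      ≤ ∫⁻ h, ENNReal.ofReal 16 * ENNReal.ofReal (min (|h| ^ (s + 4)) (|h| ^ s)) :=
        lintegral_mono fun h => by
          rw [← ENNReal.ofReal_mul (sq_nonneg _), ← ENNReal.ofReal_mul (by norm_num)]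
          exact ENNReal.ofReal_le_ofReal (sq_two_sub_two_mul_cos_mul_abs_rpow_le h s)
    _ < ⊤ := by
        rw [lintegral_const_mul' _ _ ENNReal.ofReal_ne_top]
        exact ENNReal.mul_lt_top ENNReal.ofReal_lt_top
          (lintegral_min_abs_rpow_lt_top (by linarith) (by linarith))

lemma secondDifferenceConst_ne_zero (α : ℝ) : secondDifferenceConst α ≠ 0 := by
  refine ((lintegral_pos_iff_support (by fun_prop)).2 ?_).ne'
  refine (measure_mono fun x hx => ?_).trans_lt' (by simp : 0 < volume (Ioo (0 : ℝ) 1))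
  have hcos : cos x < 1 := by
    simpa using cos_lt_cos_of_nonneg_of_le_pi le_rfl (by linarith [pi_gt_three, hx.2]) hx.1
  simp only [Function.mem_support, ne_eq, mul_eq_zero, ENNReal.ofReal_eq_zero, not_or, not_le]
  exact ⟨by nlinarith, rpow_pos_of_pos (abs_pos.2 hx.1.ne') _⟩

lemma lintegral_second_difference_mul_abs_rpow {α : ℝ} (hα : 0 < α) (lam : ℝ) :
    ∫⁻ h, ENNReal.ofReal ((2 - 2 * cos (h * lam)) ^ 2) * ENNReal.ofReal (|h| ^ (-1 - 2 * α))
      = secondDifferenceConst α * ENNReal.ofReal (|lam| ^ (2 * α)) := by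
  rcases eq_or_ne lam 0 with rfl | hlam
  · simp [zero_rpow (by positivity : 2 * α ≠ 0)]
  rw [lintegral_comp_mul_right_mul_abs_rpow (fun u => ENNReal.ofReal ((2 - 2 * cos u) ^ 2)) _
    hlam, mul_comm, secondDifferenceConst, sub_sub_cancel]

lemma lintegral_lintegral_norm_second_difference (μ : Measure ℝ) [SFinite μ] {α : ℝ}
    (hα : 0 < α) :
    ∫⁻ h : ℝ, (∫⁻ lam : ℝ, ENNReal.ofReal
        (‖Complex.exp (Complex.I * h * lam) + Complex.exp (-(Complex.I * h * lam)) - 2‖ ^ 2) ∂μ)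
        * ENNReal.ofReal (|h| ^ (-1 - 2 * α))
      = secondDifferenceConst α * ∫⁻ lam, ENNReal.ofReal (|lam| ^ (2 * α)) ∂μ := by
  have hcos : ∀ h lam : ℝ,
      ‖Complex.exp (Complex.I * h * lam) + Complex.exp (-(Complex.I * h * lam)) - 2‖ ^ 2
        = (2 - 2 * cos (h * lam)) ^ 2 := by
    intro h lam
    rw [← norm_exp_mul_I_add_exp_neg_sub_two_sq, Complex.ofReal_mul, mul_assoc]
  simp_rw [hcos, ← lintegral_mul_const' _ _ ENNReal.ofReal_ne_top]
  rw [lintegral_lintegral_swap (by fun_prop)]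
  simp_rw [lintegral_second_difference_mul_abs_rpow hα]
  exact lintegral_const_mul _ (by fun_prop)

/-- Let `μ` be a finite Borel measure on `ℝ` and `0 < α < 2`. Then
`∫ |λ|^{2α} dμ(λ) < ∞` iff
`∫_ℝ (∫_ℝ |e^{ihλ} + e^{-ihλ} - 2|² dμ(λ)) |h|^{-1-2α} dh < ∞`. -/
theorem stmt_7 (μ : Measure ℝ) [IsFiniteMeasure μ] (α : ℝ) (hα0 : 0 < α) (hα2 : α < 2) :
    (∫⁻ lam : ℝ, ENNReal.ofReal (|lam| ^ (2 * α)) ∂μ) < ⊤ ↔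
    (∫⁻ h : ℝ,
        (∫⁻ lam : ℝ, ENNReal.ofReal
            (‖Complex.exp (Complex.I * h * lam) + Complex.exp (-(Complex.I * h * lam)) - 2‖ ^ 2)
          ∂μ) * ENNReal.ofReal (|h| ^ (-1 - 2 * α)) ∂volume) < ⊤ := by
  rw [lintegral_lintegral_norm_second_difference μ hα0, lt_top_iff_ne_top, lt_top_iff_ne_top]
  simp [ENNReal.mul_eq_top, secondDifferenceConst_ne_zero,
    (secondDifferenceConst_lt_top hα0 hα2).ne]
end

section
/- Let X be a wide-sense stationary process with spectral measure μ, ψ ∈ L¹(ℝ), a ≥ 2 an integer, b > 0, and ψ_{j,k}(t) = a^{−j} ψ(a^{−j}t − k) for j ∈ ℤ, k ∈ bℤ. Then for each j, the random sequence (⟨X, ψ_{j,k}⟩)_{k∈bℤ} is wide-sense stationary with covariance E(⟨X,ψ_{j,k}⟩ conj(⟨X,ψ_{j,k'}⟩)) = ∫_ℝ e^{iλ(k−k')a^j} |ψ̂(a^jλ)|² dμ(λ). -/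
/-! Since `S` is an isometry, the covariance of two coefficients is the `L²(μ)` inner product of
their integrands, and there `e^{iλka^j} · conj (e^{iλk'a^j})` collapses to `e^{iλ(k-k')a^j}` while
`conj ψ̂ · ψ̂ = |ψ̂|²`. -/

open MeasureTheory ComplexConjugate

theorem MeasureTheory.L2.integral_mul_conj_eq_inner {α : Type*} [MeasurableSpace α]
    {ν : Measure α} (f g : Lp ℂ 2 ν) :
    ∫ x, f x * conj (g x) ∂ν = inner ℂ g f := by
  rw [L2.inner_def]
  simp only [RCLike.inner_apply]

theorem Complex.exp_mul_conj_mul_conj_exp_mul_conj (x k k' : ℝ) (c z : ℂ) (hc : conj c = c) :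
    exp (I * x * k * c) * conj z * conj (exp (I * x * k' * c) * conj z)
      = exp (I * x * (k - k') * c) * ((‖z‖ ^ 2 : ℝ) : ℂ) := by
  rw [map_mul, ← exp_conj, conj_conj, mul_mul_mul_comm, ← exp_add, conj_mul', ← ofReal_pow]
  simp only [map_mul, conj_I, conj_ofReal, hc]
  ring_nf

theorem stmt_12_general {Ω : Type*} [MeasureSpace Ω]
    (μ : Measure ℝ)
    (S : Lp ℂ 2 μ →ₗᵢ[ℂ] Lp ℂ 2 (volume : Measure Ω))
    (ψhat : ℝ → ℂ)
    (a : ℕ) (b : ℝ) (j : ℤ)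
    (hmem : ∀ k : ℝ, MemLp
      (fun lam : ℝ => Complex.exp (Complex.I * lam * k * ((a : ℂ) ^ j)) *
        (starRingEnd ℂ) (ψhat ((a : ℝ) ^ j * lam))) 2 μ)
    (coef : ℤ → Lp ℂ 2 (volume : Measure Ω))
    (hcoef : ∀ n : ℤ, coef n = S ((hmem ((n : ℝ) * b)).toLp
      (fun lam : ℝ => Complex.exp (Complex.I * lam * ((((n : ℝ) * b : ℝ)) : ℂ) * ((a : ℂ) ^ j)) *
        (starRingEnd ℂ) (ψhat ((a : ℝ) ^ j * lam))))) :
    ∀ n n' : ℤ,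
      (∫ ω, (coef n : Ω → ℂ) ω * (starRingEnd ℂ) ((coef n' : Ω → ℂ) ω) ∂(volume : Measure Ω))
        = ∫ lam : ℝ, Complex.exp (Complex.I * lam * (((n : ℝ) * b - (n' : ℝ) * b)) *
            ((a : ℂ) ^ j)) * ((‖ψhat ((a : ℝ) ^ j * lam)‖ ^ 2 : ℝ) : ℂ) ∂μ := by
  intro n n'
  rw [L2.integral_mul_conj_eq_inner, hcoef n, hcoef n', LinearIsometry.inner_map_map,
    ← L2.integral_mul_conj_eq_inner]
  have hconj : conj ((a : ℂ) ^ j) = (a : ℂ) ^ j := by simp [map_zpow₀]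
  refine integral_congr_ae ?_
  filter_upwards [(hmem ((n : ℝ) * b)).coeFn_toLp, (hmem ((n' : ℝ) * b)).coeFn_toLp]
    with lam hn hn'
  rw [hn, hn', Complex.exp_mul_conj_mul_conj_exp_mul_conj _ _ _ _ _ hconj]
  push_cast
  rfl

/-- Let `X` be a wide-sense stationary process with spectral measure `μ` (stochastic
integrals realized by the Kolmogorov isometry `S`), `ψ ∈ L¹(ℝ)` with Fourier transform
`ψ̂`, `a ≥ 2` an integer, `b > 0`, and `ψ_{j,k}(t) = a^{-j}ψ(a^{-j}t - k)`.  Then the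
random coefficients `⟨X,ψ_{j,k}⟩ = ∫ e^{iλka^j} conj(ψ̂)(a^jλ) dΦ(λ)` form, for each
`j`, a wide-sense stationary sequence over `k ∈ bℤ` with covariance
`E(⟨X,ψ_{j,k}⟩ conj ⟨X,ψ_{j,k'}⟩) = ∫ e^{iλ(k-k')a^j} |ψ̂(a^jλ)|² dμ(λ)`. -/
theorem stmt_12 {Ω : Type*} [MeasureSpace Ω] [IsProbabilityMeasure (volume : Measure Ω)]
    (μ : Measure ℝ) [IsFiniteMeasure μ]
    (S : Lp ℂ 2 μ →ₗᵢ[ℂ] Lp ℂ 2 (volume : Measure Ω))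
    (ψ : ℝ → ℂ) (hψ : Integrable ψ (volume : Measure ℝ))
    (ψhat : ℝ → ℂ)
    (hψhat : ∀ lam : ℝ, ψhat lam = ∫ t : ℝ, ψ t * Complex.exp (-(Complex.I * lam * t)) ∂volume)
    (a : ℕ) (ha : 2 ≤ a) (b : ℝ) (hb : 0 < b) (j : ℤ)
    (hmem : ∀ k : ℝ, MemLp
      (fun lam : ℝ => Complex.exp (Complex.I * lam * k * ((a : ℂ) ^ j)) *
        (starRingEnd ℂ) (ψhat ((a : ℝ) ^ j * lam))) 2 μ)
    (coef : ℤ → Lp ℂ 2 (volume : Measure Ω))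
    (hcoef : ∀ n : ℤ, coef n = S ((hmem ((n : ℝ) * b)).toLp
      (fun lam : ℝ => Complex.exp (Complex.I * lam * ((((n : ℝ) * b : ℝ)) : ℂ) * ((a : ℂ) ^ j)) *
        (starRingEnd ℂ) (ψhat ((a : ℝ) ^ j * lam))))) :
    ∀ n n' : ℤ,
      (∫ ω, (coef n : Ω → ℂ) ω * (starRingEnd ℂ) ((coef n' : Ω → ℂ) ω) ∂(volume : Measure Ω))
        = ∫ lam : ℝ, Complex.exp (Complex.I * lam * (((n : ℝ) * b - (n' : ℝ) * b)) *
            ((a : ℂ) ^ j)) * ((‖ψhat ((a : ℝ) ^ j * lam)‖ ^ 2 : ℝ) : ℂ) ∂μ :=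
  stmt_12_general μ S ψhat a b j hmem coef hcoef
end

section
/- Let X be a wide-sense stationary process whose spectral measure μ is continuous (atomless), ψ ∈ L¹(ℝ), and ψ_{j,k} as in an affine system. Then for each j ∈ ℤ, the spectral measure of the stationary sequence (⟨X, ψ_{j,k}⟩)_{k∈bℤ}, namely γ(A) = ∑_{d ∈ 𝔻_j} ∫_{A+d} |ψ̂(a^jλ)|² dμ(λ) for Borel A ⊆ 𝕋_j, is also continuous (atomless). -/
open MeasureTheory
open scoped ENNReal

/-- If the spectral measure `μ` of `X` is atomless, then for each `j` the spectral
measure `γ(A) = ∑_{d ∈ 𝔻_j} ∫_{A+d} |ψ̂(a^jλ)|² dμ(λ)` of the stationary sequence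
`(⟨X,ψ_{j,k}⟩)_{k ∈ bℤ}` (here `𝔻_j = a^{-j}(2π/b)ℤ`) is also atomless: every
singleton `{x}` has `γ`-measure zero. -/
theorem stmt_13 (μ : Measure ℝ) [IsFiniteMeasure μ] (hμ : ∀ x : ℝ, μ {x} = 0)
    (ψ : ℝ → ℂ) (hψ : Integrable ψ (volume : Measure ℝ))
    (ψhat : ℝ → ℂ)
    (hψhat : ∀ lam : ℝ, ψhat lam = ∫ t : ℝ, ψ t * Complex.exp (-(Complex.I * lam * t)) ∂volume)
    (a : ℕ) (ha : 2 ≤ a) (b : ℝ) (hb : 0 < b) (j : ℤ) :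
    ∀ x : ℝ,
      (∑' m : ℤ, ∫⁻ lam in
          {x + (a : ℝ) ^ (-j) * (2 * Real.pi / b) * (m : ℝ)},
          ENNReal.ofReal (‖ψhat ((a : ℝ) ^ j * lam)‖ ^ 2) ∂μ) = 0 := by
  intro x
  have h : ∀ m : ℤ, (∫⁻ lam in
      {x + (a : ℝ) ^ (-j) * (2 * Real.pi / b) * (m : ℝ)},
      ENNReal.ofReal (‖ψhat ((a : ℝ) ^ j * lam)‖ ^ 2) ∂μ) = 0 := by
    intro m
    exact setLIntegral_measure_zero _ _ (hμ _)
  simp only [h, tsum_zero]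
end

section
/- Let H be a separable Hilbert space and Y = ∑_n ξ_n v_n a series of independent, symmetric Gaussian random elements ξ_n v_n in H with v_n pairwise orthogonal. Then the series converges almost surely in H if and only if ∑_n E|ξ_n|² ‖v_n‖² < ∞, i.e. if and only if E‖Y‖² < ∞. -/
/-!
Write `c n = ‖v n‖ ^ 2`. By Pythagoras the partial sums converge at `ω` iff
`∑ ξ n ω ^ 2 * c n < ∞`. If `∑ σ n * c n < ∞`, this nonnegative series has finite expectation and
is therefore finite almost surely. Conversely, by independence and the Gaussian integral
`E[exp (-c ξ ^ 2)] = (1 + 2 σ c) ^ (-1/2)`, the Laplace transform `E[exp (-∑ c n ξ n ^ 2)]` is at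
most `∏ n < N, (1 + 2 σ n c n) ^ (-1/2)` for every `N`; it is positive when the series is finite
almost surely, so the products `∏ (1 + 2 σ n c n) ≥ 1 + 2 ∑ σ n c n` stay bounded.
-/

open MeasureTheory Filter Topology ProbabilityTheory
open scoped ENNReal NNReal

open Finset Real

section Orthogonal

variable {H : Type*} [NormedAddCommGroup H] [InnerProductSpace ℝ H]

theorem orthogonalFamily_span_singleton {ι : Type*} {v : ι → H}
    (horth : Pairwise fun i j => inner ℝ (v i) (v j) = 0) :
    OrthogonalFamily ℝ (fun i => ↥(ℝ ∙ v i)) fun i => (ℝ ∙ v i).subtypeₗᵢ :=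
  orthogonalFamily_iff_pairwise.2 fun i j hij =>
    Submodule.isOrtho_span.2 fun x hx y hy => by
      rw [Set.mem_singleton_iff] at hx hy
      subst hx hy
      exact horth hij

theorem exists_tendsto_sum_range_smul_iff_summable [CompleteSpace H] {v : ℕ → H}
    (horth : Pairwise fun i j => inner ℝ (v i) (v j) = 0) (a : ℕ → ℝ) :
    (∃ L, Tendsto (fun N => ∑ n ∈ range N, a n • v n) atTop (𝓝 L)) ↔
      Summable fun n => a n ^ 2 * ‖v n‖ ^ 2 := by
  have hV := orthogonalFamily_span_singleton horth
  let l n : ↥(ℝ ∙ v n) :=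
    ⟨a n • v n, Submodule.smul_mem _ _ (Submodule.mem_span_singleton_self _)⟩
  have hl : ∀ n, ‖l n‖ ^ 2 = a n ^ 2 * ‖v n‖ ^ 2 := fun n => by
    rw [Submodule.coe_norm, norm_smul, mul_pow, Real.norm_eq_abs, sq_abs]
  constructor
  · rintro ⟨L, hL⟩
    have hsq : Tendsto (fun N => ∑ n ∈ range N, a n ^ 2 * ‖v n‖ ^ 2) atTop (𝓝 (‖L‖ ^ 2)) := by
      convert hL.norm.pow 2 using 2 with N
      simp only [← hl, ← hV.norm_sum]
      rfl
    exact ((hasSum_iff_tendsto_nat_of_nonneg (fun n => by positivity) _).2 hsq).summable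
  · intro h
    have hsum : Summable fun n => a n • v n := by
      simpa using (hV.summable_iff_norm_sq_summable l).2 (by simpa only [hl] using h)
    exact ⟨_, hsum.hasSum.tendsto_sum_nat⟩

end Orthogonal

theorem Finset.one_add_sum_le_prod_one_add {ι : Type*} (s : Finset ι) {a : ι → ℝ}
    (ha : ∀ i ∈ s, 0 ≤ a i) : 1 + ∑ i ∈ s, a i ≤ ∏ i ∈ s, (1 + a i) := by
  classical
  induction s using Finset.induction_on with
  | empty => simp
  | insert j s hj ih =>
    rw [sum_insert hj, prod_insert hj]
    have hs := ih fun i hi => ha i (mem_insert_of_mem hi)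
    have hj := ha j (mem_insert_self j s)
    nlinarith [sum_nonneg fun i hi => ha i (mem_insert_of_mem hi)]

section Probability

variable {Ω : Type*} {mΩ : MeasurableSpace Ω} {μ : Measure Ω}

theorem ProbabilityTheory.iIndepFun.integral_finset_prod_eq_prod_integral {ι : Type*}
    {X : ι → Ω → ℝ} (hX : iIndepFun X μ) (mX : ∀ i, AEStronglyMeasurable (X i) μ) (s : Finset ι) :
    ∫ ω, ∏ i ∈ s, X i ω ∂μ = ∏ i ∈ s, ∫ ω, X i ω ∂μ := by
  have h := (hX.precomp (g := ((↑) : s → ι)) Subtype.val_injective)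
    |>.integral_fun_prod_eq_prod_integral fun i => mX i
  convert h using 1
  · simp_rw [← Finset.prod_coe_sort s]
  · exact (Finset.prod_coe_sort s _).symm

theorem integrable_exp_neg_of_nonneg [IsFiniteMeasure μ] {f : Ω → ℝ} (hf : Measurable f)
    (hf0 : ∀ ω, 0 ≤ f ω) : Integrable (fun ω => exp (-f ω)) μ :=
  Integrable.of_bound (hf.neg.exp.aestronglyMeasurable) 1 (ae_of_all _ fun ω => by
    rw [Real.norm_of_nonneg (exp_pos _).le]
    exact exp_le_one_iff.2 (neg_nonpos.2 (hf0 ω)))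

theorem exists_pos_le_prod_integral_exp_neg [IsProbabilityMeasure μ] {Y : ℕ → Ω → ℝ}
    (hind : iIndepFun Y μ) (hmeas : ∀ n, Measurable (Y n)) (hY0 : ∀ n ω, 0 ≤ Y n ω)
    (hsum : ∀ᵐ ω ∂μ, Summable fun n => Y n ω) :
    ∃ δ > 0, ∀ s : Finset ℕ, δ ≤ ∏ n ∈ s, ∫ ω, exp (-Y n ω) ∂μ := by
  have hint_tsum : Integrable (fun ω => exp (-∑' n, Y n ω)) μ :=
    integrable_exp_neg_of_nonneg (.tsum hmeas) fun ω => tsum_nonneg (hY0 · ω)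
  refine ⟨_, integral_exp_pos hint_tsum, fun s => ?_⟩
  have hprod := (hind.comp (fun _ y => exp (-y)) fun _ => by fun_prop)
    |>.integral_finset_prod_eq_prod_integral (fun n => (hmeas n).neg.exp.aestronglyMeasurable) s
  simp only [Function.comp_apply, ← exp_sum, sum_neg_distrib] at hprod
  rw [← hprod]
  refine integral_mono_ae hint_tsum (integrable_exp_neg_of_nonneg (Finset.measurable_sum s
    fun n _ => hmeas n) fun ω => sum_nonneg fun n _ => hY0 n ω) ?_
  filter_upwards [hsum] with ω hω
  exact exp_le_exp.2 (neg_le_neg (hω.sum_le_tsum s fun n _ => hY0 n ω))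

theorem ae_summable_of_summable_integral {Y : ℕ → Ω → ℝ} (hint : ∀ n, Integrable (Y n) μ)
    (hY0 : ∀ n ω, 0 ≤ Y n ω) (hsum : Summable fun n => ∫ ω, Y n ω ∂μ) :
    ∀ᵐ ω ∂μ, Summable fun n => Y n ω := by
  have h := summable_norm_of_tsum_eLpNorm_ne_top le_rfl (fun n => (hint n).aestronglyMeasurable)
    (μ := μ) ?_
  · filter_upwards [h] with ω hω
    simpa only [Real.norm_of_nonneg (hY0 _ ω)] using hω
  simp only [eLpNorm_one_eq_lintegral_enorm, ← ofReal_integral_norm_eq_lintegral_enorm (hint _),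
    Real.norm_of_nonneg (hY0 _ _)]
  rw [← ENNReal.ofReal_tsum_of_nonneg (fun n => integral_nonneg (hY0 n)) hsum]
  exact ENNReal.ofReal_ne_top

end Probability

theorem integral_sq_gaussianReal (v : ℝ≥0) : ∫ x, x ^ 2 ∂gaussianReal 0 v = v := by
  simpa [variance_eq_integral measurable_id'.aemeasurable] using
    variance_fun_id_gaussianReal (μ := 0) (v := v)

theorem integral_exp_neg_mul_sq_gaussianReal {c : ℝ} (hc : 0 ≤ c) (v : ℝ≥0) :
    ∫ x, exp (-(c * x ^ 2)) ∂gaussianReal 0 v = (√(1 + 2 * v * c))⁻¹ := by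
  rcases eq_or_ne v 0 with rfl | hv
  · simp
  have hv' : (0 : ℝ) < v := by positivity
  have hb : 0 < c + (2 * (v : ℝ))⁻¹ := by positivity
  calc ∫ x, exp (-(c * x ^ 2)) ∂gaussianReal 0 v
      = ∫ x, (√(2 * π * v))⁻¹ * exp (-(c + (2 * (v : ℝ))⁻¹) * x ^ 2) := by
        rw [integral_gaussianReal_eq_integral_smul hv]
        refine integral_congr_ae (ae_of_all _ fun x => ?_)
        simp only [gaussianPDFReal_def, smul_eq_mul, mul_assoc, ← Real.exp_add]
        congr 2
        field_simp
        ring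
    _ = (√(2 * π * v))⁻¹ * √(π / (c + (2 * (v : ℝ))⁻¹)) := by
        rw [integral_const_mul, integral_gaussian]
    _ = (√(1 + 2 * v * c))⁻¹ := by
        rw [← Real.sqrt_inv, ← Real.sqrt_inv, ← Real.sqrt_mul (by positivity)]
        congr 1
        field_simp
        ring

section GaussianSeries

variable {Ω : Type*} {mΩ : MeasurableSpace Ω} {μ : Measure Ω} {ξ : ℕ → Ω → ℝ} {σ : ℕ → ℝ≥0}
  {c : ℕ → ℝ}

theorem integral_sq_of_map_eq_gaussianReal {X : Ω → ℝ} {v : ℝ≥0} (hX : Measurable X)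
    (hlaw : μ.map X = gaussianReal 0 v) : ∫ ω, X ω ^ 2 ∂μ = v := by
  rw [← integral_sq_gaussianReal, ← hlaw, integral_map hX.aemeasurable (by fun_prop)]

theorem ae_summable_sq_mul_of_summable (hmeas : ∀ n, Measurable (ξ n))
    (hgauss : ∀ n, μ.map (ξ n) = gaussianReal 0 (σ n)) (hc : ∀ n, 0 ≤ c n)
    (hsum : Summable fun n => (σ n : ℝ) * c n) :
    ∀ᵐ ω ∂μ, Summable fun n => ξ n ω ^ 2 * c n := by
  refine ae_summable_of_summable_integral (fun n => ?_)
    (fun n ω => mul_nonneg (sq_nonneg _) (hc n)) ?_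
  · have hL2 : MemLp (ξ n) 2 μ := (memLp_map_measure_iff aestronglyMeasurable_id
      (hmeas n).aemeasurable).1 (hgauss n ▸ memLp_id_gaussianReal 2)
    exact hL2.integrable_sq.mul_const _
  · simpa only [integral_mul_const, integral_sq_of_map_eq_gaussianReal (hmeas _) (hgauss _)]
      using hsum

theorem summable_mul_of_ae_summable_sq_mul [IsProbabilityMeasure μ]
    (hmeas : ∀ n, Measurable (ξ n)) (hindep : iIndepFun ξ μ)
    (hgauss : ∀ n, μ.map (ξ n) = gaussianReal 0 (σ n)) (hc : ∀ n, 0 ≤ c n)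
    (hsum : ∀ᵐ ω ∂μ, Summable fun n => ξ n ω ^ 2 * c n) :
    Summable fun n => (σ n : ℝ) * c n := by
  have hlaw : ∀ n, ∫ ω, exp (-(ξ n ω ^ 2 * c n)) ∂μ = (√(1 + 2 * σ n * c n))⁻¹ := fun n => by
    rw [← integral_exp_neg_mul_sq_gaussianReal (hc n), ← hgauss n,
      integral_map (hmeas n).aemeasurable (by fun_prop)]
    simp only [mul_comm]
  obtain ⟨δ, hδ, hle⟩ := exists_pos_le_prod_integral_exp_neg
    (hindep.comp (fun n x => x ^ 2 * c n) fun n => by fun_prop) (fun n => by fun_prop)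
    (fun n ω => mul_nonneg (sq_nonneg (ξ n ω)) (hc n)) hsum
  have hnn : ∀ n, 0 ≤ 2 * (σ n : ℝ) * c n := fun n => mul_nonneg (by positivity) (hc n)
  have hprod : ∀ N, ∏ n ∈ range N, (1 + 2 * σ n * c n) ≤ δ⁻¹ ^ 2 := fun N => by
    have h := hle (range N)
    simp only [Function.comp_apply, hlaw] at h
    have hpos : 0 < ∏ n ∈ range N, (1 + 2 * σ n * c n) := prod_pos fun n _ => by linarith [hnn n]
    rw [prod_inv_distrib, ← Real.sqrt_prod _ fun n _ => by linarith [hnn n]] at h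
    calc ∏ n ∈ range N, (1 + 2 * σ n * c n) = √(∏ n ∈ range N, (1 + 2 * σ n * c n)) ^ 2 :=
          (sq_sqrt hpos.le).symm
      _ ≤ δ⁻¹ ^ 2 := pow_le_pow_left₀ (sqrt_nonneg _) ((le_inv_comm₀ hδ (sqrt_pos.2 hpos)).1 h) 2
  refine (summable_mul_left_iff two_ne_zero).1 ?_
  simp only [← mul_assoc]
  refine summable_of_sum_range_le (c := δ⁻¹ ^ 2 - 1) hnn fun N => ?_
  have := one_add_sum_le_prod_one_add (range N) fun n _ => hnn n
  linarith [hprod N]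

end GaussianSeries

theorem stmt_16_general {Ω : Type*} [MeasureSpace Ω] [IsProbabilityMeasure (volume : Measure Ω)]
    {H : Type*} [NormedAddCommGroup H] [InnerProductSpace ℝ H] [CompleteSpace H]
    (ξ : ℕ → Ω → ℝ) (hmeas : ∀ n, Measurable (ξ n))
    (hindep : iIndepFun ξ (volume : Measure Ω))
    (v : ℕ → H) (horth : ∀ m n : ℕ, m ≠ n → (inner ℝ (v m) (v n) : ℝ) = 0)
    (σ : ℕ → ℝ≥0)
    (hgauss : ∀ n, Measure.map (ξ n) (volume : Measure Ω) = gaussianReal 0 (σ n)) :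
    (∀ᵐ ω ∂(volume : Measure Ω), ∃ L : H,
        Tendsto (fun N : ℕ => ∑ n ∈ Finset.range N, ξ n ω • v n) atTop (𝓝 L)) ↔
      Summable (fun n : ℕ => (σ n : ℝ) * ‖v n‖ ^ 2) := by
  rw [eventually_congr (ae_of_all _ fun ω =>
    exists_tendsto_sum_range_smul_iff_summable (fun m n => horth m n) (ξ · ω))]
  exact ⟨summable_mul_of_ae_summable_sq_mul hmeas hindep hgauss fun n => sq_nonneg _,
    ae_summable_sq_mul_of_summable hmeas hgauss fun n => sq_nonneg _⟩

/-- Let `H` be a separable Hilbert space and `Y = ∑_n ξ_n v_n` a series of independent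
centered Gaussian random elements with `v_n` pairwise orthogonal.  Then the series
converges a.s. in `H` iff `∑_n E|ξ_n|² ‖v_n‖² < ∞` (i.e. iff `E‖Y‖² < ∞`). -/
theorem stmt_16 {Ω : Type*} [MeasureSpace Ω] [IsProbabilityMeasure (volume : Measure Ω)]
    {H : Type*} [NormedAddCommGroup H] [InnerProductSpace ℝ H] [CompleteSpace H]
    [TopologicalSpace.SeparableSpace H]
    (ξ : ℕ → Ω → ℝ) (hmeas : ∀ n, Measurable (ξ n))
    (hindep : iIndepFun ξ (volume : Measure Ω))
    (v : ℕ → H) (horth : ∀ m n : ℕ, m ≠ n → (inner ℝ (v m) (v n) : ℝ) = 0)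
    (σ : ℕ → ℝ≥0)
    (hgauss : ∀ n, Measure.map (ξ n) (volume : Measure Ω) = gaussianReal 0 (σ n)) :
    (∀ᵐ ω ∂(volume : Measure Ω), ∃ L : H,
        Tendsto (fun N : ℕ => ∑ n ∈ Finset.range N, ξ n ω • v n) atTop (𝓝 L)) ↔
      Summable (fun n : ℕ => (σ n : ℝ) * ‖v n‖ ^ 2) :=
  stmt_16_general ξ hmeas hindep v horth σ hgauss
end
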